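/- arXiv:1703.01627 — 6 statements merged into one kernel-verified Lean document; each statement's English description precedes it below -/
import Mathlib

section
/- For every a ∈ ℤ_p, the series (1+X)^a := Σ_{n≥0} binom(a, n) X^n is a well-defined element of ℤ_p[[X]] (each coefficient binom(a,n) lies in ℤ_p), it is a unit of ℤ_p[[X]], and the map a ↦ (1+X)^a is a group homomorphism from (ℤ_p, +) to the unit group ℤ_p[[X]]^×, i.e. (1+X)^{a+b} = (1+X)^a·(1+X)^b for all a, b ∈ ℤ_p. -/
/-!
`ℤ_p` is a binomial ring, and `n! · Ring.choose a n` is the descending product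
`a(a-1)⋯(a-n+1)`, so `binom(a,n)` is `Ring.choose a n` and in particular integral.
Hence `(1+X)^a` is `PowerSeries.binomialSeries ℤ_p a`: its constant coefficient is `1`,
and Chu–Vandermonde makes `a ↦ (1+X)^a` additive-to-multiplicative.
-/

open Finset

variable (p : ℕ) [Fact p.Prime]

/-- The generalized binomial coefficient `binom(a, n) = a(a−1)⋯(a−n+1)/n!` in `ℚ_p`. -/
noncomputable def padicBinom (a : ℤ_[p]) (n : ℕ) : ℚ_[p] :=
  (∏ i ∈ Finset.range n, ((a : ℚ_[p]) - (i : ℚ_[p]))) / (n.factorial : ℚ_[p])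

/-- The binomial coefficient as an element of `ℤ_p` (defined to be `0` if it were not
integral; the theorem below asserts it really is integral). -/
noncomputable def padicIntBinom (a : ℤ_[p]) (n : ℕ) : ℤ_[p] :=
  if h : ‖padicBinom p a n‖ ≤ 1 then ⟨padicBinom p a n, h⟩ else 0

/-- The power series `(1+X)^a = Σ_{n≥0} binom(a,n) Xⁿ` over `ℤ_p`. -/
noncomputable def onePlusXPow (a : ℤ_[p]) : PowerSeries ℤ_[p] :=
  PowerSeries.mk (padicIntBinom p a)

theorem Ring.factorial_mul_choose_eq_prod_range {R : Type*} [CommRing R] [BinomialRing R]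
    (r : R) (n : ℕ) : (n.factorial : R) * choose r n = ∏ j ∈ range n, (r - j) := by
  rw [← nsmul_eq_mul, ← descPochhammer_eq_factorial_smul_choose,
    ← Polynomial.aeval_eq_smeval, Polynomial.aeval_def, ← Polynomial.eval_map,
    descPochhammer_map, descPochhammer_eval_eq_prod_range]

theorem padicBinom_eq_choose (a : ℤ_[p]) (n : ℕ) :
    padicBinom p a n = ((Ring.choose a n : ℤ_[p]) : ℚ_[p]) := by
  have hn : (n.factorial : ℚ_[p]) ≠ 0 := mod_cast n.factorial_ne_zero
  have hprod :
      ((∏ j ∈ range n, (a - j) : ℤ_[p]) : ℚ_[p]) = ∏ j ∈ range n, ((a : ℚ_[p]) - j) :=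
    map_prod PadicInt.Coe.ringHom (fun j : ℕ => a - j) (range n)
  rw [padicBinom, div_eq_iff hn, ← hprod, ← Ring.factorial_mul_choose_eq_prod_range,
    PadicInt.coe_mul, PadicInt.coe_natCast, mul_comm]

theorem padicIntBinom_eq_choose (a : ℤ_[p]) (n : ℕ) :
    padicIntBinom p a n = Ring.choose a n := by
  have h : ‖padicBinom p a n‖ ≤ 1 :=
    padicBinom_eq_choose p a n ▸ (Ring.choose a n).norm_le_one
  exact Subtype.ext ((congrArg Subtype.val (dif_pos h)).trans (padicBinom_eq_choose p a n))

theorem onePlusXPow_eq_binomialSeries (a : ℤ_[p]) :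
    onePlusXPow p a = PowerSeries.binomialSeries ℤ_[p] a := by
  ext n
  simp [onePlusXPow, padicIntBinom_eq_choose]

/-- For every `a ∈ ℤ_p`: the coefficients of `(1+X)^a` are the genuine binomial
coefficients (in particular `binom(a,n) ∈ ℤ_p`), `(1+X)^a` is a unit of `ℤ_p[[X]]`,
and `a ↦ (1+X)^a` is a homomorphism from `(ℤ_p, +)` to `ℤ_p[[X]]ˣ`. -/
theorem stmt3 :
    (∀ (a : ℤ_[p]) (n : ℕ), ((padicIntBinom p a n : ℚ_[p])) = padicBinom p a n) ∧
    (∀ a : ℤ_[p], IsUnit (onePlusXPow p a)) ∧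
    (∀ a b : ℤ_[p], onePlusXPow p (a + b) = onePlusXPow p a * onePlusXPow p b) := by
  refine ⟨fun a n => ?_, fun a => ?_, fun a b => ?_⟩
  · rw [padicIntBinom_eq_choose, padicBinom_eq_choose]
  · rw [onePlusXPow_eq_binomialSeries, PowerSeries.isUnit_iff_constantCoeff,
      PowerSeries.binomialSeries_constantCoeff]
    exact isUnit_one
  · simp only [onePlusXPow_eq_binomialSeries, PowerSeries.binomialSeries_add]
end

section
/- Let p be a prime and let I = (p, X) be the maximal ideal of ℤ[[X]] generated by p and X. Then for every n ≥ 0 one has (1+X)^{p^n} − 1 ∈ I^{n+1}. In particular (1+X)^{p^n} − 1 tends to 0 in the (p, X)-adic topology, so X is topologically nilpotent with respect to the powers of the Frobenius-type substitutions. -/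
lemma aux_pow {R : Type*} [CommRing R] (y : R) (m : ℕ) :
    ∃ g : R, (1 + y) ^ m = 1 + m * y + y ^ 2 * g := by
  induction m with
  | zero => exact ⟨0, by ring⟩
  | succ m ih =>
    obtain ⟨g, hg⟩ := ih
    exact ⟨g + m + y * g, by rw [pow_succ, hg]; push_cast; ring⟩

/-- For `I = (p, X) ⊆ ℤ[[X]]` one has `(1+X)^{pⁿ} − 1 ∈ I^{n+1}` for all `n ≥ 0`. -/
theorem stmt4 (p : ℕ) (hp : p.Prime) (n : ℕ) :
    (1 + PowerSeries.X : PowerSeries ℤ) ^ (p ^ n) - 1 ∈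
      (Ideal.span ({(p : PowerSeries ℤ), PowerSeries.X} : Set (PowerSeries ℤ))) ^ (n + 1) := by
  set I : Ideal (PowerSeries ℤ) :=
    Ideal.span ({(p : PowerSeries ℤ), PowerSeries.X} : Set (PowerSeries ℤ)) with hI
  have hpI : (p : PowerSeries ℤ) ∈ I := Ideal.subset_span (by simp)
  induction n with
  | zero =>
    simpa using Ideal.subset_span (show (PowerSeries.X : PowerSeries ℤ) ∈ _ by simp)
  | succ n ih =>
    set y : PowerSeries ℤ := (1 + PowerSeries.X) ^ (p ^ n) - 1 with hy
    obtain ⟨g, hg⟩ := aux_pow y p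
    have key : (1 + PowerSeries.X : PowerSeries ℤ) ^ (p ^ (n + 1)) - 1
        = (p : PowerSeries ℤ) * y + y ^ 2 * g := by
      have : (1 + PowerSeries.X : PowerSeries ℤ) ^ (p ^ (n + 1)) = (1 + y) ^ p := by
        have h1y : (1 : PowerSeries ℤ) + y = (1 + PowerSeries.X) ^ (p ^ n) := by
          rw [hy]; ring
        rw [pow_succ, pow_mul, h1y]
      rw [this, hg]; ring
    rw [key]
    apply Ideal.add_mem
    · have := Ideal.mul_mem_mul hpI ih
      rwa [← pow_succ'] at this
    · apply Ideal.mul_mem_right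
      have h2 : y ^ 2 ∈ I ^ ((n + 1) + (n + 1)) := by
        rw [pow_add]; rw [sq]; exact Ideal.mul_mem_mul ih ih
      exact Ideal.pow_le_pow_right (by omega) h2
end

section
/- Let φ : ℤ_p[[T]] → ℤ_p[[T]] be the ℤ_p-algebra endomorphism determined by φ(T) = (1+T)^p − 1. Then the map (f_0, …, f_{p−1}) ↦ Σ_{i=0}^{p−1} (1+T)^i · φ(f_i) is a bijection from ℤ_p[[T]]^p onto ℤ_p[[T]]; equivalently, ℤ_p[[T]] is a free module of rank p over the subring φ(ℤ_p[[T]]) with basis 1, (1+T), …, (1+T)^{p−1}. -/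
/-- Composition (substitution) `f ↦ f ∘ g` of power series, valid when the constant
coefficient of `g` is zero: the `n`-th coefficient of `f(g)` is
`Σ_{k ≤ n} (coeff k f) · (coeff n (g^k))`. -/
noncomputable def psComp (R : Type*) [CommRing R] (g f : PowerSeries R) : PowerSeries R :=
  PowerSeries.mk fun n =>
    ∑ k ∈ Finset.range (n + 1), PowerSeries.coeff k f * PowerSeries.coeff n (g ^ k)

/-!
Write `φ = subst g` with `g = (1 + T)^p - 1`. Modulo the maximal ideal `g` becomes `T^p`, so
Weierstrass division by `g` shows that `1, 1 + T, …, (1 + T)^(p-1)` is a `ℤ_p`-basis of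
`ℤ_p⟦T⟧ ⧸ (g)`, and that `g` is a non-zero-divisor. Splitting off constant terms,
`f_i = f_i(0) + T f_i'`, gives `Σ (1+T)^i φ(f_i) = Σ f_i(0) (1+T)^i + g · Σ (1+T)^i φ(f_i')`.
Reducing this identity mod `g` and cancelling `g` proves injectivity one coefficient at a time;
iterating the division by `g` produces a preimage whose error lies in `⋂ (g^k) ⊆ ⋂ (T^k) = 0`.
-/

open PowerSeries

namespace PowerSeries

section CommRing

variable {R : Type*} [CommRing R] {g : R⟦X⟧}

theorem X_pow_dvd_pow_of_constantCoeff_eq_zero (hg : constantCoeff g = 0) (k : ℕ) :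
    X ^ k ∣ g ^ k :=
  pow_dvd_pow_of_dvd (X_dvd_iff.mpr hg) k

theorem eq_zero_of_forall_X_pow_dvd {f : R⟦X⟧} (h : ∀ k, X ^ k ∣ f) : f = 0 := by
  ext n
  exact X_pow_dvd_iff.mp (h (n + 1)) n n.lt_succ_self

variable {ι : Type*} [Fintype ι]

noncomputable def sumMulSubst (g : R⟦X⟧) (e f : ι → R⟦X⟧) : R⟦X⟧ :=
  ∑ i, e i * (f i).subst g

theorem sumMulSubst_eq (hg : constantCoeff g = 0) (e f : ι → R⟦X⟧) :
    sumMulSubst g e f = ∑ i, C (constantCoeff (f i)) * e i +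
      g * sumMulSubst g e (fun i ↦ mk fun n ↦ coeff (n + 1) (f i)) := by
  have hs := HasSubst.of_constantCoeff_zero' hg
  simp only [sumMulSubst, Finset.mul_sum, ← Finset.sum_add_distrib]
  refine Finset.sum_congr rfl fun i _ ↦ ?_
  conv_lhs => rw [eq_X_mul_shift_add_const (f i)]
  rw [subst_add hs, subst_mul hs, subst_X hs, subst_C]
  change e i * (g * _ + C (constantCoeff (f i))) = _
  ring

theorem sumMulSubst_injective (hg0 : constantCoeff g = 0) (hg : IsLeftRegular g)
    (e : ι → R⟦X⟧)
    (he : Function.Injective fun a : ι → R ↦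
      Ideal.Quotient.mk (Ideal.span {g}) (∑ i, C (a i) * e i)) :
    Function.Injective (sumMulSubst g e) := by
  have split_off_constant : ∀ f f' : ι → R⟦X⟧, sumMulSubst g e f = sumMulSubst g e f' →
      (fun i ↦ constantCoeff (f i)) = (fun i ↦ constantCoeff (f' i)) ∧
      sumMulSubst g e (fun i ↦ mk fun n ↦ coeff (n + 1) (f i)) =
        sumMulSubst g e (fun i ↦ mk fun n ↦ coeff (n + 1) (f' i)) := by
    intro f f' h
    rw [sumMulSubst_eq hg0, sumMulSubst_eq hg0 e f'] at h
    set s := sumMulSubst g e (fun i ↦ mk fun n ↦ coeff (n + 1) (f i))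
    set s' := sumMulSubst g e (fun i ↦ mk fun n ↦ coeff (n + 1) (f' i))
    have hc : (fun i ↦ constantCoeff (f i)) = (fun i ↦ constantCoeff (f' i)) :=
      he (Ideal.Quotient.eq.mpr
        (Ideal.mem_span_singleton'.mpr ⟨s' - s, by linear_combination -h⟩))
    have hc' : ∀ i, constantCoeff (f i) = constantCoeff (f' i) := congrFun hc
    simp only [hc', add_right_inj] at h
    exact ⟨hc, hg h⟩
  suffices ∀ n f f', sumMulSubst g e f = sumMulSubst g e f' →
      ∀ i, coeff n (f i) = coeff n (f' i) from
    fun f f' h ↦ funext fun i ↦ ext fun n ↦ this n f f' h i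
  intro n
  induction n with
  | zero => exact fun f f' h i ↦ by simpa using congrFun (split_off_constant f f' h).1 i
  | succ n ih => exact fun f f' h i ↦ by simpa using ih _ _ (split_off_constant f f' h).2 i

theorem sumMulSubst_surjective (hg0 : constantCoeff g = 0) (e : ι → R⟦X⟧)
    (he : Function.Surjective fun a : ι → R ↦
      Ideal.Quotient.mk (Ideal.span {g}) (∑ i, C (a i) * e i)) :
    Function.Surjective (sumMulSubst g e) := by
  have hdiv : ∀ h, ∃ (a : ι → R) (q : R⟦X⟧), h = ∑ i, C (a i) * e i + g * q := by
    intro h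
    obtain ⟨a, ha⟩ := he (Ideal.Quotient.mk _ h)
    obtain ⟨q, hq⟩ := Ideal.mem_span_singleton'.mp (Ideal.Quotient.eq.mp ha)
    exact ⟨a, -q, by linear_combination hq⟩
  choose a q hq using hdiv
  let F : R⟦X⟧ → ι → R⟦X⟧ := fun h i ↦ mk fun n ↦ a (q^[n] h) i
  have hF : ∀ h, sumMulSubst g e (F h) =
      ∑ i, C (a h i) * e i + g * sumMulSubst g e (F (q h)) := by
    intro h
    have hshift : (fun i ↦ mk fun n ↦ coeff (n + 1) (F h i)) = F (q h) := by
      funext i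
      ext n
      simp only [F, coeff_mk, Function.iterate_succ_apply]
    have hconst : ∀ i, constantCoeff (F h i) = a h i := fun i ↦ by
      rw [← coeff_zero_eq_constantCoeff_apply, coeff_mk, Function.iterate_zero_apply]
    rw [sumMulSubst_eq hg0, hshift]
    simp only [hconst]
  have hdvd : ∀ k h, g ^ k ∣ h - sumMulSubst g e (F h) := by
    intro k
    induction k with
    | zero => simp
    | succ k ih =>
      intro h
      rw [pow_succ', hF, show h - _ = g * (q h - sumMulSubst g e (F (q h))) by
        linear_combination hq h]
      exact mul_dvd_mul_left g (ih (q h))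
  exact fun h ↦ ⟨F h, (sub_eq_zero.mp (eq_zero_of_forall_X_pow_dvd fun k ↦
    (X_pow_dvd_pow_of_constantCoeff_eq_zero hg0 k).trans (hdvd k h))).symm⟩

end CommRing

section LocalRing

open IsLocalRing Polynomial

variable {A : Type*} [CommRing A] [IsLocalRing A] {g : A⟦X⟧} {n : ℕ}

theorem order_map_residue_one_add_X_pow_sub_one (p : ℕ) [Fact p.Prime]
    [CharP (ResidueField A) p] : (((1 + X : A⟦X⟧) ^ p - 1).map (residue A)).order = p := by
  have : CharP (ResidueField A)⟦X⟧ p := charP_of_injective_ringHom (f := C) C_injective p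
  simp [add_pow_char, order_X_pow]

theorem isLeftRegular_of_map_residue_ne_zero [IsHausdorff (maximalIdeal A) A]
    (hg : g.map (residue A) ≠ 0) : IsLeftRegular g :=
  isLeftRegular_iff_right_eq_zero_of_mul.mpr fun q hq ↦
    (IsWeierstrassDivision.eq_zero hg (q := q) (r := 0) ⟨by simp, by simp [hq]⟩).1

variable [IsAdicComplete (maximalIdeal A) A]

theorem bijective_mk_coe_degreeLT (hn : (g.map (residue A)).order = n) :
    Function.Bijective fun r : A[X]_n ↦
      Ideal.Quotient.mk (Ideal.span {g}) ((r : A[X]) : A⟦X⟧) := by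
  have hg : g.map (residue A) ≠ 0 := by simp [← order_eq_top, hn]
  -- `IsWeierstrassDivision` measures degrees through `Ideal.Quotient.mk`, not `residue`
  have hdeg : ((g.map (Ideal.Quotient.mk (maximalIdeal A))).order.toNat : WithBot ℕ) = n :=
    congrArg (fun k : ℕ∞ ↦ ((k.toNat : ℕ) : WithBot ℕ)) hn
  constructor
  · intro r r' h
    obtain ⟨q, hq⟩ := Ideal.mem_span_singleton'.mp (Ideal.Quotient.eq.mp h)
    have H : IsWeierstrassDivision 0 g (-q) ((r - r' : A[X]_n) : A[X]) :=
      ⟨hdeg ▸ mem_degreeLT.mp (r - r').2, by push_cast; linear_combination hq⟩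
    exact sub_eq_zero.mp (Subtype.ext (H.eq_zero hg).2)
  · intro h
    obtain ⟨h, rfl⟩ := Ideal.Quotient.mk_surjective h
    obtain ⟨q, r, H⟩ := exists_isWeierstrassDivision h hg
    refine ⟨⟨r, mem_degreeLT.mpr (hdeg ▸ H.degree_lt)⟩, Ideal.Quotient.eq.mpr ?_⟩
    exact Ideal.mem_span_singleton'.mpr ⟨-q, by linear_combination H.eq_mul_add⟩

theorem bijective_mk_sum_C_mul_one_add_X_pow (hn : (g.map (residue A)).order = n) :
    Function.Bijective fun a : Fin n → A ↦
      Ideal.Quotient.mk (Ideal.span {g}) (∑ i, C (a i) * (1 + X) ^ (i : ℕ)) := by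
  let b := (degreeLT.basis A n).map (taylorLinearEquiv 1 n)
  have hb : ∀ i, ((b i : A[X]) : A⟦X⟧) = (1 + X) ^ (i : ℕ) := fun i ↦ by
    change ((taylor 1 (degreeLT.basis A n i : A[X]) : A[X]) : A⟦X⟧) = _
    rw [degreeLT.basis_val, taylor_X_pow, Polynomial.C_1, add_comm]
    push_cast
    rfl
  convert (bijective_mk_coe_degreeLT hn).comp b.equivFun.symm.bijective using 2 with a
  rw [Function.comp_apply, Module.Basis.equivFun_symm_apply, Submodule.coe_sum]
  congr 1
  rw [← Polynomial.coeToPowerSeries.ringHom_apply, map_sum]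
  simp only [Submodule.coe_smul, Polynomial.smul_eq_C_mul, map_mul,
    Polynomial.coeToPowerSeries.ringHom_apply, Polynomial.coe_C, hb]

theorem bijective_sum_one_add_X_pow_mul_subst (hg0 : constantCoeff g = 0)
    (hn : (g.map (residue A)).order = n) :
    Function.Bijective fun f : Fin n → A⟦X⟧ ↦
      ∑ i : Fin n, (1 + X) ^ (i : ℕ) * (f i).subst g :=
  have hg : g.map (residue A) ≠ 0 := by simp [← order_eq_top, hn]
  ⟨sumMulSubst_injective hg0 (isLeftRegular_of_map_residue_ne_zero hg) _
      (bijective_mk_sum_C_mul_one_add_X_pow hn).1,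
    sumMulSubst_surjective hg0 _ (bijective_mk_sum_C_mul_one_add_X_pow hn).2⟩

theorem bijective_sum_one_add_X_pow_mul_subst_one_add_X_pow_sub_one (p : ℕ) [Fact p.Prime]
    [CharP (ResidueField A) p] :
    Function.Bijective fun f : Fin p → A⟦X⟧ ↦
      ∑ i : Fin p, (1 + X) ^ (i : ℕ) * (f i).subst ((1 + X : A⟦X⟧) ^ p - 1) :=
  bijective_sum_one_add_X_pow_mul_subst (by simp) (order_map_residue_one_add_X_pow_sub_one p)

end LocalRing

end PowerSeries

theorem psComp_eq_subst {R : Type*} [CommRing R] {g : R⟦X⟧} (hg : constantCoeff g = 0)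
    (f : R⟦X⟧) : psComp R g f = f.subst g := by
  ext n
  rw [psComp, coeff_mk, coeff_subst' (HasSubst.of_constantCoeff_zero' hg),
    finsum_eq_sum_of_support_subset (s := Finset.range (n + 1))]
  · simp only [smul_eq_mul]
  · intro k hk
    contrapose! hk
    rw [Finset.coe_range, Set.mem_Iio, not_lt] at hk
    simp [X_pow_dvd_iff.mp (X_pow_dvd_pow_of_constantCoeff_eq_zero hg k) n hk]

instance PadicInt.charP_residueField (p : ℕ) [Fact p.Prime] :
    CharP (IsLocalRing.ResidueField ℤ_[p]) p :=
  charP_of_injective_ringHom (f := PadicInt.residueField.symm.toRingHom)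
    PadicInt.residueField.symm.injective p

/-- Let `φ : ℤ_p[[T]] → ℤ_p[[T]]` be the substitution endomorphism `T ↦ (1+T)^p − 1`.
Then `(f_0, …, f_{p−1}) ↦ Σ_i (1+T)^i φ(f_i)` is a bijection from `ℤ_p[[T]]^p` onto
`ℤ_p[[T]]`; i.e. `ℤ_p[[T]]` is free of rank `p` over `φ(ℤ_p[[T]])` with basis
`1, (1+T), …, (1+T)^{p−1}`. -/
theorem stmt5 (p : ℕ) [Fact p.Prime] :
    Function.Bijective (fun f : Fin p → PowerSeries ℤ_[p] =>
      ∑ i : Fin p, (1 + PowerSeries.X : PowerSeries ℤ_[p]) ^ (i : ℕ) *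
        psComp ℤ_[p] ((1 + PowerSeries.X) ^ p - 1) (f i)) := by
  have hg0 : constantCoeff ((1 + X : ℤ_[p]⟦X⟧) ^ p - 1) = 0 := by simp
  simpa only [psComp_eq_subst hg0] using
    bijective_sum_one_add_X_pow_mul_subst_one_add_X_pow_sub_one p
end

section
/- For every locally analytic function g : ℤ_p^× → ℚ_p there exists a locally analytic function f : ℤ_p^× → ℚ_p such that x·f′(x) = g(x) for all x ∈ ℤ_p^×. That is, the operator f ↦ x·f′ is surjective on the space of locally analytic ℚ_p-valued functions on ℤ_p^×. -/
/-!
Dividing by the unit `x`, it suffices to find a locally analytic antiderivative of the locally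
analytic function `h = g / x`. Near each point `h` is a power series `∑ aₙ (y - x)ⁿ`, and its
termwise antiderivative `∑ aₙ / (n + 1) (y - x)ⁿ⁺¹` still converges near `x` because
`‖1 / (n + 1)‖ ≤ n + 1` grows only polynomially. The sphere `‖x‖ = 1` is compact, and in the
ultrametric space `ℚ_[p]` balls of a common radius are equal or disjoint, so local antiderivatives
on the balls of a Lebesgue-number radius glue to a global one.
-/

open Filter Metric Topology
open scoped NNReal ENNReal

theorem Padic.inv_norm_natCast_le {p : ℕ} [Fact p.Prime] {n : ℕ} (hn : n ≠ 0) :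
    ‖(n : ℚ_[p])‖⁻¹ ≤ n := by
  have hnorm : ‖(n : ℚ_[p])‖ = ((p : ℝ) ^ padicValNat p n)⁻¹ := by
    rw [← Rat.cast_natCast, Padic.eq_padicNorm,
      padicNorm.eq_zpow_of_nonzero (by exact_mod_cast hn)]
    simp
  rw [hnorm, inv_inv]
  exact_mod_cast Nat.le_of_dvd (Nat.pos_of_ne_zero hn) pow_padicValNat_dvd

namespace FormalMultilinearSeries

variable {𝕜 : Type*} [NontriviallyNormedField 𝕜] (P : FormalMultilinearSeries 𝕜 𝕜 𝕜)

noncomputable def antideriv : FormalMultilinearSeries 𝕜 𝕜 𝕜 :=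
  ofScalars 𝕜 fun
    | 0 => 0
    | n + 1 => P.coeff n / (n + 1)

@[simp]
theorem coeff_antideriv_zero : P.antideriv.coeff 0 = 0 := coeff_ofScalars

@[simp]
theorem coeff_antideriv_succ (n : ℕ) : P.antideriv.coeff (n + 1) = P.coeff n / (n + 1) :=
  coeff_ofScalars

theorem half_le_radius_antideriv (h𝕜 : ∀ n : ℕ, ‖(n + 1 : 𝕜)‖⁻¹ ≤ n + 1) {r : ℝ≥0}
    (hr : (r : ℝ≥0∞) < P.radius) : ((r / 2 : ℝ≥0) : ℝ≥0∞) ≤ P.antideriv.radius := by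
  obtain ⟨C, hC0, hC⟩ := P.norm_mul_pow_le_of_lt_radius hr
  refine P.antideriv.le_radius_of_bound (C * r) fun n => ?_
  rw [norm_apply_eq_norm_coef]
  cases n with
  | zero => simp only [coeff_antideriv_zero, norm_zero, zero_mul]; positivity
  | succ n =>
    rw [coeff_antideriv_succ]
    have hgrowth : (n + 1 : ℝ) / 2 ^ (n + 1) ≤ 1 := by
      rw [div_le_one (by positivity)]
      exact_mod_cast Nat.lt_two_pow_self.le
    calc ‖P.coeff n / (n + 1)‖ * ((r / 2 : ℝ≥0) : ℝ) ^ (n + 1)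
        ≤ ‖P.coeff n‖ * (n + 1) * (r / 2 : ℝ) ^ (n + 1) := by
          rw [norm_div, div_eq_mul_inv]
          push_cast
          gcongr
          exact h𝕜 n
      _ = ‖P n‖ * r ^ n * (r * ((n + 1) / 2 ^ (n + 1))) := by
          rw [norm_apply_eq_norm_coef, div_pow]; field_simp; ring
      _ ≤ C * (r * 1) := by gcongr; exact hC n
      _ = C * r := by rw [mul_one]

theorem derivSeries_antideriv_apply_diag [CharZero 𝕜] (n : ℕ) (z : 𝕜) :
    P.antideriv.derivSeries n (fun _ => z) z = z * P n (fun _ => z) := by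
  have hn : (n + 1 : 𝕜) ≠ 0 := Nat.cast_add_one_ne_zero n
  rw [derivSeries_apply_diag, apply_eq_pow_smul_coeff, apply_eq_pow_smul_coeff,
    coeff_antideriv_succ]
  simp only [smul_eq_mul, nsmul_eq_mul, Nat.cast_add, Nat.cast_one]
  field_simp
  ring

theorem hasFPowerSeriesOnBall_sum_sub [CompleteSpace 𝕜] (hP : 0 < P.radius) (x : 𝕜) :
    HasFPowerSeriesOnBall (fun y => P.sum (y - x)) P x P.radius := by
  simpa using (P.hasFPowerSeriesOnBall hP).comp_sub x

end FormalMultilinearSeries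

open FormalMultilinearSeries

section

variable {𝕜 : Type*} [NontriviallyNormedField 𝕜]

theorem HasFPowerSeriesOnBall.hasDerivAt_sum_antideriv [CharZero 𝕜] [CompleteSpace 𝕜]
    {h : 𝕜 → 𝕜} {P : FormalMultilinearSeries 𝕜 𝕜 𝕜} {x : 𝕜} {r : ℝ≥0∞}
    (hP : HasFPowerSeriesOnBall h P x r) {y : 𝕜}
    (hy : y ∈ eball x (min r P.antideriv.radius)) :
    HasDerivAt (fun y => P.antideriv.sum (y - x)) (h y) y := by
  set F := fun y => P.antideriv.sum (y - x)
  have hyq : y ∈ eball x P.antideriv.radius := eball_subset_eball (min_le_right _ _) hy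
  have hF := P.antideriv.hasFPowerSeriesOnBall_sum_sub (pos_of_gt hyq) x
  suffices deriv F y = h y from this ▸ (hF.analyticAt_of_mem hyq).differentiableAt.hasDerivAt
  obtain rfl | hne := eq_or_ne y x
  · rw [hF.hasFPowerSeriesAt.deriv, ← hP.hasFPowerSeriesAt.coeff_zero fun _ => 1]
    simp
  set z := y - x
  have hz : z ∈ eball (0 : 𝕜) (min r P.antideriv.radius) := by
    rwa [mem_eball, edist_zero_right, ← edist_eq_enorm_sub]
  have hxz : x + z = y := add_sub_cancel x y
  have hsumF :
      HasSum (fun n => P.antideriv.derivSeries n (fun _ => z) z) (fderiv 𝕜 F y z) := by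
    rw [← hxz]
    exact (hF.fderiv.hasSum (eball_subset_eball (min_le_right _ _) hz)).mapL
      (ContinuousLinearMap.apply 𝕜 𝕜 z)
  have hsumh : HasSum (fun n => z * P n (fun _ => z)) (z * h y) := by
    rw [← hxz]
    exact (hP.hasSum (eball_subset_eball (min_le_left _ _) hz)).mul_left z
  simp only [derivSeries_antideriv_apply_diag] at hsumF
  have hfderiv : fderiv 𝕜 F y z = z * deriv F y := by
    rw [← fderiv_apply_one_eq_deriv, ← smul_eq_mul, ← ContinuousLinearMap.map_smul, smul_eq_mul,
      mul_one]
  exact mul_left_cancel₀ (sub_ne_zero.mpr hne) (hfderiv ▸ hsumF.unique hsumh)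

theorem AnalyticAt.exists_eventually_hasDerivAt [CharZero 𝕜] [CompleteSpace 𝕜]
    (h𝕜 : ∀ n : ℕ, ‖(n + 1 : 𝕜)‖⁻¹ ≤ n + 1) {h : 𝕜 → 𝕜} {x : 𝕜} (hh : AnalyticAt 𝕜 h x) :
    ∃ F : 𝕜 → 𝕜, ∀ᶠ y in 𝓝 x, AnalyticAt 𝕜 F y ∧ HasDerivAt F (h y) y := by
  obtain ⟨P, r, hP⟩ := hh
  obtain ⟨ρ, hρ0, hρr⟩ := ENNReal.lt_iff_exists_nnreal_btwn.mp hP.r_pos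
  have hρ : (0 : ℝ≥0∞) < ((ρ / 2 : ℝ≥0) : ℝ≥0∞) :=
    ENNReal.coe_pos.mpr (half_pos (by exact_mod_cast hρ0))
  have hq : 0 < P.antideriv.radius :=
    hρ.trans_le (P.half_le_radius_antideriv h𝕜 (hρr.trans_le hP.r_le))
  have hF := P.antideriv.hasFPowerSeriesOnBall_sum_sub hq x
  refine ⟨fun y => P.antideriv.sum (y - x), ?_⟩
  filter_upwards [eball_mem_nhds x (lt_min hP.r_pos hq)] with y hy
  exact ⟨hF.analyticAt_of_mem (eball_subset_eball (min_le_right _ _) hy),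
    hP.hasDerivAt_sum_antideriv hy⟩

end

theorem IsCompact.exists_forall_of_forall_exists_eventually {X Y : Type*}
    [PseudoMetricSpace X] [IsUltrametricDist X] [Nonempty Y] {s : Set X} (hs : IsCompact s)
    {P : (X → Y) → X → Prop} (hP : ∀ {f g x}, f =ᶠ[𝓝 x] g → P f x → P g x)
    (hloc : ∀ x ∈ s, ∃ f, ∀ᶠ y in 𝓝 x, P f y) :
    ∃ f : X → Y, ∀ x ∈ s, P f x := by
  obtain ⟨δ, hδ, hball⟩ := lebesgue_number_lemma_of_metric hs
    (c := fun f : X → Y => interior {y | P f y}) (fun _ => isOpen_interior) fun x hx => by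
      obtain ⟨f, hf⟩ := hloc x hx
      exact Set.mem_iUnion.mpr ⟨f, mem_interior_iff_mem_nhds.mpr hf⟩
  have hG : ∀ B : Set X, ∃ f : X → Y, ∀ x ∈ s, B = ball x δ → ∀ y ∈ B, P f y := by
    intro B
    by_cases hB : ∃ x ∈ s, B = ball x δ
    · obtain ⟨x, hx, rfl⟩ := hB
      obtain ⟨f, hf⟩ := hball x hx
      exact ⟨f, fun _ _ _ y hy => interior_subset (hf hy)⟩
    · exact ⟨Classical.arbitrary _, fun x hx hBx => absurd ⟨x, hx, hBx⟩ hB⟩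
  -- `ball y δ = ball x δ` for `y ∈ ball x δ`, so one local solution per ball of radius `δ`
  -- defines a function that agrees near each `x ∈ s` with a local solution.
  choose G hG using hG
  refine ⟨fun y => G (ball y δ) y, fun x hx => hP ?_ (hG _ x hx rfl x (mem_ball_self hδ))⟩
  filter_upwards [ball_mem_nhds x hδ] with y hy
  rw [IsUltrametricDist.ball_eq_of_mem hy]

/-- The operator `f ↦ x·f′` is surjective on locally analytic functions on
`ℤ_p^× = {x : ℚ_p | ‖x‖ = 1}`: for every `g` analytic at each point of `ℤ_p^×`
there is `f`, analytic at each point of `ℤ_p^×`, with `x·f′(x) = g(x)` there. -/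
theorem stmt8 (p : ℕ) [Fact p.Prime] (g : ℚ_[p] → ℚ_[p])
    (hg : ∀ x : ℚ_[p], ‖x‖ = 1 → AnalyticAt ℚ_[p] g x) :
    ∃ f : ℚ_[p] → ℚ_[p], (∀ x : ℚ_[p], ‖x‖ = 1 → AnalyticAt ℚ_[p] f x) ∧
      ∀ x : ℚ_[p], ‖x‖ = 1 → x * deriv f x = g x := by
  have hQp (n : ℕ) : ‖(n + 1 : ℚ_[p])‖⁻¹ ≤ n + 1 := by
    exact_mod_cast Padic.inv_norm_natCast_le n.succ_ne_zero
  have hne {x : ℚ_[p]} (hx : ‖x‖ = 1) : x ≠ 0 := norm_ne_zero_iff.mp (hx ▸ one_ne_zero)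
  have hlocal : ∀ x ∈ sphere (0 : ℚ_[p]) 1, ∃ F : ℚ_[p] → ℚ_[p],
      ∀ᶠ y in 𝓝 x, AnalyticAt ℚ_[p] F y ∧ HasDerivAt F (g y / y) y := by
    intro x hx
    rw [mem_sphere_zero_iff_norm] at hx
    exact ((hg x hx).div analyticAt_id (hne hx)).exists_eventually_hasDerivAt hQp
  obtain ⟨f, hf⟩ := (isCompact_sphere (0 : ℚ_[p]) 1).exists_forall_of_forall_exists_eventually
    (P := fun f x => AnalyticAt ℚ_[p] f x ∧ HasDerivAt f (g x / x) x)
    (fun hfg ⟨han, hder⟩ => ⟨han.congr hfg, hder.congr_of_eventuallyEq hfg.symm⟩) hlocal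
  refine ⟨f, fun x hx => (hf x (mem_sphere_zero_iff_norm.mpr hx)).1, fun x hx => ?_⟩
  rw [(hf x (mem_sphere_zero_iff_norm.mpr hx)).2.deriv, mul_div_cancel₀ _ (hne hx)]
end

section
/- Let L be a complete field extension of ℚ_p and let i ≥ 0 be a natural number. There exists no locally analytic function f : ℤ_p → L satisfying i·x·f(x) − x²·f′(x) = x^{i+1} for all x ∈ ℤ_p. (I.e. x^{i+1} is not in the image of the operator u⁻ = i·x − x²·(d/dx) on locally analytic functions on ℤ_p.) -/
/-!
Differentiate `i·x·f − x²·f′ = x^{i+1}` exactly `i + 1` times at `0`. Since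
`(x·g)^{(n+1)}(0) = (n+1)·g^{(n)}(0)` and `(x·f′)^{(i)}(0) = i·f^{(i)}(0)`, both terms on the left
contribute `(i+1)·i·f^{(i)}(0)` and cancel, while the right side gives `(i+1)! ≠ 0`.
-/

open Topology

section

variable {𝕜 : Type*} [NontriviallyNormedField 𝕜] {F : Type*} [NormedAddCommGroup F]
  [NormedSpace 𝕜 F]

theorem iteratedDeriv_succ_smul_id_zero {n : ℕ} {g : 𝕜 → F} (hg : ContDiffAt 𝕜 (n + 1) g 0) :
    iteratedDeriv (n + 1) (fun y => y • g y) 0 = (n + 1) • iteratedDeriv n g 0 := by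
  have leibniz := iteratedDerivWithin_smul (Set.mem_univ (0 : 𝕜)) uniqueDiffOn_univ
    contDiffWithinAt_id hg.contDiffWithinAt
  change iteratedDeriv (n + 1) ((id : 𝕜 → 𝕜) • g) 0 = _
  simpa [Finset.sum_range_succ', iteratedDeriv_id] using leibniz

theorem iteratedDeriv_smul_deriv_zero {n : ℕ} {g : 𝕜 → F} (hg : ContDiffAt 𝕜 (n + 1) g 0) :
    iteratedDeriv n (fun y => y • deriv g y) 0 = n • iteratedDeriv n g 0 := by
  cases n with
  | zero => simp
  | succ n =>
    rw [iteratedDeriv_succ_smul_id_zero (hg.derivWithin le_rfl), ← iteratedDeriv_succ']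

noncomputable def uMinus (i : ℕ) (f : 𝕜 → F) (x : 𝕜) : F :=
  (i : 𝕜) • x • f x - x ^ 2 • deriv f x

theorem iteratedDeriv_succ_uMinus_zero {i : ℕ} {f : 𝕜 → F} (hf : ContDiffAt 𝕜 (i + 2) f 0) :
    iteratedDeriv (i + 1) (uMinus i f) 0 = 0 := by
  have hf₁ : ContDiffAt 𝕜 (i + 1) f 0 := hf.of_le (by gcongr; norm_num)
  have hf' : ContDiffAt 𝕜 (i + 1) (deriv f) 0 := hf.derivWithin le_rfl
  have h_eq : uMinus i f = fun x => x • (i : 𝕜) • f x - x • x • deriv f x := by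
    funext x
    rw [uMinus, smul_comm, pow_two, mul_smul]
  rw [h_eq, iteratedDeriv_fun_sub (by fun_prop) (by fun_prop),
    iteratedDeriv_succ_smul_id_zero (by fun_prop), iteratedDeriv_succ_smul_id_zero (by fun_prop),
    iteratedDeriv_smul_deriv_zero hf₁, iteratedDeriv_fun_const_smul_field, Nat.cast_smul_eq_nsmul,
    sub_self]

theorem not_uMinus_eventuallyEq_pow_smul [CharZero 𝕜] {i : ℕ} {f : 𝕜 → F}
    (hf : ContDiffAt 𝕜 (i + 2) f 0) {v : F} (hv : v ≠ 0) :
    ¬ uMinus i f =ᶠ[𝓝 0] fun x => x ^ (i + 1) • v := by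
  intro h
  have h_deriv := h.iteratedDeriv_eq (i + 1)
  rw [iteratedDeriv_succ_uMinus_zero hf, iteratedDeriv_smul_const (by fun_prop),
    iteratedDeriv_fun_pow_zero, if_pos rfl, eq_comm, smul_eq_zero] at h_deriv
  exact h_deriv.elim (by exact_mod_cast (i + 1).factorial_ne_zero) hv

end

/-- Let `L` be a complete normed field extension of `ℚ_p` and `i ∈ ℕ`. There is no
locally analytic function `f : ℤ_p → L` with `i·x·f(x) − x²·f′(x) = x^{i+1}` on
`ℤ_p = {x : ℚ_p | ‖x‖ ≤ 1}`, i.e. `x^{i+1}` is not in the image of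
`u⁻ = i·x − x²·(d/dx)`. -/
theorem stmt10 (p : ℕ) [Fact p.Prime] (L : Type*) [NontriviallyNormedField L]
    [NormedAlgebra ℚ_[p] L] [CompleteSpace L] (i : ℕ) :
    ¬ ∃ f : ℚ_[p] → L, (∀ x : ℚ_[p], ‖x‖ ≤ 1 → AnalyticAt ℚ_[p] f x) ∧
      ∀ x : ℚ_[p], ‖x‖ ≤ 1 →
        (i : L) * (x • f x) - x ^ 2 • deriv f x = (x ^ (i + 1)) • (1 : L) := by
  rintro ⟨f, hf, hsol⟩
  refine not_uMinus_eventuallyEq_pow_smul (i := i) (hf 0 (by simp)).contDiffAt one_ne_zero ?_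
  filter_upwards [Metric.closedBall_mem_nhds (0 : ℚ_[p]) one_pos] with x hx
  rw [← hsol x (by simpa using hx), uMinus, Nat.cast_smul_eq_nsmul, nsmul_eq_mul]
end

section
/- Let M be a Hausdorff topological space and let f : ℤ_p^× → M be a continuous function such that f(x) = f(x/(1−px)) for all x ∈ ℤ_p^× (note 1−px is a unit). Then f(x) = f(y) whenever x ≡ y (mod pℤ_p); in particular f is locally constant and is completely determined by the finitely many values f(1), f(2), …, f(p−1). -/
/-! In terms of `w = x⁻¹` the relation reads `f(w⁻¹) = f((w - p)⁻¹)`, so `w ↦ f(w⁻¹)` is invariant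
under translation by `pℤ`. Since `ℤ` is dense in `ℤ_p`, continuity makes it invariant under
translation by `pℤ_p`, and `x ≡ y (mod p)` iff `x⁻¹ ≡ y⁻¹ (mod p)` for units. -/

open IsUltrametricDist

lemma div_one_sub_mul_eq_inv_sub_inv {K : Type*} [Field K] {x : K} (hx : x ≠ 0) (a : K) :
    x / (1 - a * x) = (x⁻¹ - a)⁻¹ := by
  rw [← inv_div, sub_div, one_div, mul_div_assoc, div_self hx, mul_one]

namespace Padic

variable {p : ℕ} [Fact p.Prime]

lemma norm_add_p_mul_eq_one {w t : ℚ_[p]} (hw : ‖w‖ = 1) (ht : ‖t‖ ≤ 1) :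
    ‖w + p * t‖ = 1 := by
  have hlt : ‖(p : ℚ_[p]) * t‖ < ‖w‖ := by
    rw [norm_mul, norm_p, hw]
    calc (p : ℝ)⁻¹ * ‖t‖ ≤ (p : ℝ)⁻¹ := mul_le_of_le_one_right (by positivity) ht
      _ < 1 := inv_lt_one_of_one_lt₀ (mod_cast (Fact.out : p.Prime).one_lt)
  rw [norm_add_eq_max_of_norm_ne_norm hlt.ne', max_eq_left hlt.le, hw]

lemma norm_inv_sub_inv_of_norm_eq_one {x y : ℚ_[p]} (hx : ‖x‖ = 1) (hy : ‖y‖ = 1) :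
    ‖x⁻¹ - y⁻¹‖ = ‖x - y‖ := by
  have hx0 : x ≠ 0 := norm_ne_zero_iff.mp (hx ▸ one_ne_zero)
  have hy0 : y ≠ 0 := norm_ne_zero_iff.mp (hy ▸ one_ne_zero)
  rw [inv_sub_inv hx0 hy0, norm_div, norm_mul, hx, hy, mul_one, div_one, norm_sub_rev]

theorem eq_of_norm_sub_le_of_forall_sub_p_eq {M : Type*} [TopologicalSpace M] [T2Space M]
    {F : ℚ_[p] → M}
    (hF : ContinuousOn F {w | ‖w‖ = 1}) (hshift : ∀ w : ℚ_[p], ‖w‖ = 1 → F (w - p) = F w)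
    {v w : ℚ_[p]} (hw : ‖w‖ = 1) (hvw : ‖v - w‖ ≤ (p : ℝ)⁻¹) : F v = F w := by
  have hshift_int (k : ℤ) : F (w + p * k) = F w := by
    have hnorm (k : ℤ) : ‖w + p * k‖ = 1 := norm_add_p_mul_eq_one hw (norm_int_le_one k)
    induction k using Int.induction_on with
    | zero => simp
    | succ k ih => rw [← ih, ← hshift _ (hnorm _)]; congr 1; push_cast; ring
    | pred k ih => rw [← ih, ← hshift (w + p * (-k : ℤ)) (hnorm _)]; congr 1; push_cast; ring
  have hcont : Continuous fun z : ℤ_[p] => F (w + p * z) :=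
    hF.comp_continuous (by fun_prop) fun z => norm_add_p_mul_eq_one hw z.norm_le_one
  have hconst : (fun z : ℤ_[p] => F (w + p * z)) = fun _ => F w :=
    PadicInt.denseRange_intCast.equalizer hcont continuous_const
      (funext fun k => by simpa using hshift_int k)
  have hp : (p : ℚ_[p]) ≠ 0 := mod_cast (Fact.out : p.Prime).ne_zero
  have ht : ‖(v - w) / p‖ ≤ 1 := by
    rwa [norm_div, norm_p, div_le_one (inv_pos.mpr (mod_cast (Fact.out : p.Prime).pos))]
  have hvt : v = w + p * ((v - w) / p) := by field_simp; ring
  rw [hvt]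
  exact congrFun hconst ⟨_, ht⟩

end Padic

/-- If `M` is Hausdorff and `f` is continuous on `ℤ_p^× = {x : ℚ_p | ‖x‖ = 1}` with
`f(x) = f(x/(1 − px))` for all `x ∈ ℤ_p^×`, then `f(x) = f(y)` whenever
`x ≡ y (mod pℤ_p)`; in particular `f` is determined by finitely many values. -/
theorem stmt13 (p : ℕ) [Fact p.Prime] (M : Type*) [TopologicalSpace M] [T2Space M]
    (f : ℚ_[p] → M) (hf : ContinuousOn f {x : ℚ_[p] | ‖x‖ = 1})
    (h : ∀ x : ℚ_[p], ‖x‖ = 1 → f x = f (x / (1 - (p : ℚ_[p]) * x))) :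
    ∀ x y : ℚ_[p], ‖x‖ = 1 → ‖y‖ = 1 → ‖x - y‖ ≤ (p : ℝ)⁻¹ → f x = f y := by
  intro x y hx hy hxy
  have hinv {z : ℚ_[p]} (hz : ‖z‖ = 1) : ‖z⁻¹‖ = 1 := by rw [norm_inv, hz, inv_one]
  have hF : ContinuousOn (fun w => f w⁻¹) {w : ℚ_[p] | ‖w‖ = 1} :=
    hf.comp
      (continuousOn_inv₀.mono fun w (hw : ‖w‖ = 1) => norm_ne_zero_iff.mp (hw ▸ one_ne_zero))
      fun w hw => hinv hw
  have hshift (w : ℚ_[p]) (hw : ‖w‖ = 1) : f (w - p)⁻¹ = f w⁻¹ := by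
    have hw0 : w ≠ 0 := norm_ne_zero_iff.mp (hw ▸ one_ne_zero)
    rw [h w⁻¹ (hinv hw), div_one_sub_mul_eq_inv_sub_inv (inv_ne_zero hw0), inv_inv]
  simpa using Padic.eq_of_norm_sub_le_of_forall_sub_p_eq hF hshift (hinv hy)
    ((Padic.norm_inv_sub_inv_of_norm_eq_one hx hy).trans_le hxy)
end
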